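/- If A is an α-Noetherian ring, then the polynomial ring A[X] is (ω ⊗ α)-Noetherian, where ⊗ is the Hessenberg natural product. -/

import Mathlib

/-!
For a left ideal `I` of `A[X]`, the coefficients in degree `d` of the elements of `I` of degree
at most `d` form a left ideal `L_d(I)` of `A`, increasing in `d`. Along the list `σ` we keep, for
every degree `d`, a `β d`-good list of `A` spanning a subideal of `L_d(⟨σ⟩)`, with `β` constant
from some `D` on. A polynomial outside `⟨σ⟩` is congruent modulo `⟨σ⟩` to some `g` of degree `e`
whose leading coefficient is not in `L_e(⟨σ⟩)`; appending it drops `β e` to some `γ < β e` and caps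
every `β d` with `d ≥ e` at `γ`. The ordinal `ω ⨳ β D ♯ ∑_{d < D} (β d - β D)` then decreases:
either the eventual value drops, and the factor `ω` absorbs the finitely many new excesses, or one
of the excesses drops. For `σ = []` we may take `β ≡ α` and `D = 0`, of measure `ω ⨳ α`.
-/

open Ordinal

/-- A list is good ((-1)-good) if it is nonempty and its last entry lies in the
submodule generated by the preceding entries. -/
def GoodList (A : Type*) {M : Type*} [Ring A] [AddCommGroup M] [Module A M]
    (σ : List M) : Prop :=
  ∃ (l : List M) (x : M), σ = l ++ [x] ∧ x ∈ Submodule.span A {y | y ∈ l}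

/-- A list `σ` is `α`-good if for every `x`, the appended list `σ.x` is either good
((-1)-good) or `β`-good for some ordinal `β < α`.  A module `M` is `α`-Noetherian
if the empty list `[] : List M` is `α`-good; a ring is `α`-Noetherian if it is
`α`-Noetherian as a left module over itself. -/
def AlphaGood (A : Type*) {M : Type*} [Ring A] [AddCommGroup M] [Module A M]
    (α : Ordinal) (σ : List M) : Prop :=
  ∀ x : M, GoodList A (σ ++ [x]) ∨ ∃ (β : Ordinal) (_ : β < α), AlphaGood A β (σ ++ [x])
termination_by α
namespace Ordinal
universe u
noncomputable def nadd : Ordinal.{u} → Ordinal.{u} → Ordinal.{u}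
  | a, b =>
    max (blsub.{u, u} a fun a' _ => nadd a' b) (blsub.{u, u} b fun b' _ => nadd a b')
termination_by o₁ o₂ => (o₁, o₂)
noncomputable def nmul : Ordinal.{u} → Ordinal.{u} → Ordinal.{u}
  | a, b => sInf {c | ∀ a' < a, ∀ b' < b, nadd (nmul a' b) (nmul a b') < nadd c (nmul a' b')}
termination_by a b => (a, b)
end Ordinal

local infixl:65 " ♯ " => Ordinal.nadd
local infixl:70 " ⨳ " => Ordinal.nmul

namespace Ordinal

section NaturalAddition

theorem nadd_le_iff {a b c : Ordinal} :
    b ♯ c ≤ a ↔ (∀ b' < b, b' ♯ c < a) ∧ ∀ c' < c, b ♯ c' < a := by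
  rw [nadd, max_le_iff, blsub_le_iff, blsub_le_iff]

theorem lt_nadd_iff {a b c : Ordinal} :
    a < b ♯ c ↔ (∃ b' < b, a ≤ b' ♯ c) ∨ ∃ c' < c, a ≤ b ♯ c' := by
  rw [nadd, lt_max_iff, lt_blsub_iff, lt_blsub_iff]
  simp only [exists_prop]

theorem nadd_lt_nadd_left {b c : Ordinal} (h : b < c) (a : Ordinal) : a ♯ b < a ♯ c :=
  lt_nadd_iff.2 (Or.inr ⟨b, h, le_rfl⟩)

theorem nadd_lt_nadd_right {b c : Ordinal} (h : b < c) (a : Ordinal) : b ♯ a < c ♯ a :=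
  lt_nadd_iff.2 (Or.inl ⟨b, h, le_rfl⟩)

theorem nadd_le_nadd_left {b c : Ordinal} (h : b ≤ c) (a : Ordinal) : a ♯ b ≤ a ♯ c :=
  StrictMono.monotone (fun _ _ h => nadd_lt_nadd_left h a) h

theorem nadd_le_nadd_right {b c : Ordinal} (h : b ≤ c) (a : Ordinal) : b ♯ a ≤ c ♯ a :=
  StrictMono.monotone (fun _ _ h => nadd_lt_nadd_right h a) h

theorem nadd_le_nadd {a b c d : Ordinal} (h₁ : a ≤ b) (h₂ : c ≤ d) : a ♯ c ≤ b ♯ d :=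
  (nadd_le_nadd_left h₂ a).trans (nadd_le_nadd_right h₁ d)

theorem nadd_lt_nadd_of_lt_of_le {a b c d : Ordinal} (h₁ : a < b) (h₂ : c ≤ d) :
    a ♯ c < b ♯ d :=
  (nadd_le_nadd_left h₂ a).trans_lt (nadd_lt_nadd_right h₁ d)

theorem nadd_lt_nadd_of_le_of_lt {a b c d : Ordinal} (h₁ : a ≤ b) (h₂ : c < d) :
    a ♯ c < b ♯ d :=
  (nadd_lt_nadd_left h₂ a).trans_le (nadd_le_nadd_right h₁ d)

theorem lt_of_nadd_lt_nadd_right {a b c : Ordinal} (h : b ♯ a < c ♯ a) : b < c :=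
  lt_of_not_ge fun h' => (h.trans_le (nadd_le_nadd_right h' a)).false

theorem nadd_comm (a b : Ordinal) : a ♯ b = b ♯ a := by
  induction a using WellFoundedLT.induction generalizing b with | ind a IHa =>
  induction b using WellFoundedLT.induction with | ind b IHb =>
  refine le_antisymm (nadd_le_iff.2 ⟨fun a' ha => ?_, fun b' hb => ?_⟩)
    (nadd_le_iff.2 ⟨fun b' hb => ?_, fun a' ha => ?_⟩)
  · rw [IHa a' ha]; exact nadd_lt_nadd_left ha b
  · rw [IHb b' hb]; exact nadd_lt_nadd_right hb a
  · rw [← IHb b' hb]; exact nadd_lt_nadd_left hb a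
  · rw [← IHa a' ha]; exact nadd_lt_nadd_right ha b

@[simp]
theorem nadd_zero (a : Ordinal) : a ♯ 0 = a := by
  induction a using WellFoundedLT.induction with | ind a IH =>
  refine le_antisymm (nadd_le_iff.2 ⟨fun a' ha => ?_, fun c hc => absurd hc not_lt_zero⟩)
    (le_of_forall_lt fun a' ha => ?_)
  · rwa [IH a' ha]
  · rw [← IH a' ha]; exact nadd_lt_nadd_right ha 0

@[simp]
theorem zero_nadd (a : Ordinal) : 0 ♯ a = a := by rw [nadd_comm, nadd_zero]

theorem nadd_assoc (a b c : Ordinal) : a ♯ b ♯ c = a ♯ (b ♯ c) := by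
  induction a using WellFoundedLT.induction generalizing b c with | ind a IHa =>
  induction b using WellFoundedLT.induction generalizing c with | ind b IHb =>
  induction c using WellFoundedLT.induction with | ind c IHc =>
  refine le_antisymm (nadd_le_iff.2 ⟨fun x hx => ?_, fun c' hc => ?_⟩)
    (nadd_le_iff.2 ⟨fun a' ha => ?_, fun x hx => ?_⟩)
  · rcases lt_nadd_iff.1 hx with ⟨a', ha, h⟩ | ⟨b', hb, h⟩
    · refine (nadd_le_nadd_right h c).trans_lt ?_
      rw [IHa a' ha]; exact nadd_lt_nadd_right ha _
    · refine (nadd_le_nadd_right h c).trans_lt ?_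
      rw [IHb b' hb]; exact nadd_lt_nadd_left (nadd_lt_nadd_right hb c) a
  · rw [IHc c' hc]; exact nadd_lt_nadd_left (nadd_lt_nadd_left hc b) a
  · rw [← IHa a' ha]; exact nadd_lt_nadd_right (nadd_lt_nadd_right ha b) c
  · rcases lt_nadd_iff.1 hx with ⟨b', hb, h⟩ | ⟨c', hc, h⟩
    · refine (nadd_le_nadd_left h a).trans_lt ?_
      rw [← IHb b' hb]; exact nadd_lt_nadd_right (nadd_lt_nadd_left hb a) c
    · refine (nadd_le_nadd_left h a).trans_lt ?_
      rw [← IHc c' hc]; exact nadd_lt_nadd_left hc _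

instance : Std.Associative nadd := ⟨nadd_assoc⟩
instance : Std.Commutative nadd := ⟨nadd_comm⟩

theorem le_self_nadd {a b : Ordinal} : a ≤ a ♯ b := by
  simpa using nadd_le_nadd_left (zero_le (a := b)) a

theorem nadd_one (a : Ordinal) : a ♯ 1 = Order.succ a := by
  induction a using WellFoundedLT.induction with | ind a IH =>
  refine le_antisymm (nadd_le_iff.2 ⟨fun a' ha => ?_, fun c hc => ?_⟩) ?_
  · rw [IH a' ha]; exact Order.succ_lt_succ ha
  · rw [Order.lt_one_iff.1 hc, nadd_zero]; exact Order.lt_succ a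
  · simpa using Order.succ_le_of_lt (nadd_lt_nadd_left zero_lt_one a)

theorem add_le_nadd (a b : Ordinal) : a + b ≤ a ♯ b := by
  induction b using WellFoundedLT.induction with | ind b IH =>
  refine le_of_forall_lt fun x hx => ?_
  rcases lt_or_ge x a with h | h
  · exact h.trans_le le_self_nadd
  · rw [← Ordinal.add_sub_cancel_of_le h] at hx ⊢
    have hlt : x - a < b := (add_lt_add_iff_left a).1 hx
    exact (IH _ hlt).trans_lt (nadd_lt_nadd_left hlt a)

end NaturalAddition

section NaturalMultiplication

theorem nmul_def (a b : Ordinal) :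
    a ⨳ b = sInf {c | ∀ a' < a, ∀ b' < b, a' ⨳ b ♯ a ⨳ b' < c ♯ a' ⨳ b'} := by
  rw [nmul]

theorem nmul_nadd_lt {a b a' b' : Ordinal} (ha : a' < a) (hb : b' < b) :
    a' ⨳ b ♯ a ⨳ b' < a ⨳ b ♯ a' ⨳ b' := by
  have hne : {c | ∀ a' < a, ∀ b' < b, a' ⨳ b ♯ a ⨳ b' < c ♯ a' ⨳ b'}.Nonempty := by
    obtain ⟨c, hc⟩ : BddAbove ((fun x ↦ x.1 ⨳ b ♯ a ⨳ x.2) '' Set.Iio a ×ˢ Set.Iio b) :=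
      bddAbove_of_small
    exact ⟨_, fun x hx y hy ↦
      (Order.lt_succ_of_le <| hc <| Set.mem_image_of_mem _ <| Set.mk_mem_prod hx hy).trans_le
        le_self_nadd⟩
  rw [nmul_def a b]
  exact csInf_mem hne a' ha b' hb

theorem nmul_le_iff {a b c : Ordinal} :
    a ⨳ b ≤ c ↔ ∀ a' < a, ∀ b' < b, a' ⨳ b ♯ a ⨳ b' < c ♯ a' ⨳ b' := by
  refine ⟨fun h a' ha b' hb => (nmul_nadd_lt ha hb).trans_le (nadd_le_nadd_right h _),
    fun h => ?_⟩
  rw [nmul_def]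
  exact csInf_le' h

theorem lt_nmul_iff {a b c : Ordinal} :
    c < a ⨳ b ↔ ∃ a' < a, ∃ b' < b, c ♯ a' ⨳ b' ≤ a' ⨳ b ♯ a ⨳ b' := by
  simpa using (nmul_le_iff (a := a) (b := b) (c := c)).not

theorem nmul_nadd_le {a b a' b' : Ordinal} (ha : a' ≤ a) (hb : b' ≤ b) :
    a' ⨳ b ♯ a ⨳ b' ≤ a ⨳ b ♯ a' ⨳ b' := by
  rcases ha.eq_or_lt with rfl | ha
  · exact le_rfl
  rcases hb.eq_or_lt with rfl | hb
  · exact (nadd_comm _ _).le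
  exact (nmul_nadd_lt ha hb).le

@[simp]
theorem nmul_zero (a : Ordinal) : a ⨳ 0 = 0 :=
  le_antisymm (nmul_le_iff.2 fun _ _ _ hb => absurd hb not_lt_zero) zero_le

@[simp]
theorem zero_nmul (a : Ordinal) : 0 ⨳ a = 0 :=
  le_antisymm (nmul_le_iff.2 fun _ ha _ _ => absurd ha not_lt_zero) zero_le

theorem nmul_comm (a b : Ordinal) : a ⨳ b = b ⨳ a := by
  induction a using WellFoundedLT.induction generalizing b with | ind a IHa =>
  induction b using WellFoundedLT.induction with | ind b IHb =>
  refine le_antisymm (nmul_le_iff.2 fun a' ha b' hb => ?_) (nmul_le_iff.2 fun b' hb a' ha => ?_)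
  · rw [IHa a' ha, IHb b' hb, IHa a' ha b', nadd_comm]
    exact nmul_nadd_lt hb ha
  · rw [← IHa a' ha, ← IHb b' hb, ← IHa a' ha b', nadd_comm]
    exact nmul_nadd_lt ha hb

theorem nmul_lt_nmul_of_pos_left {a b c : Ordinal} (h₁ : a < b) (h₂ : 0 < c) :
    c ⨳ a < c ⨳ b := by
  simpa using nmul_nadd_lt h₂ h₁

theorem nmul_le_nmul_left {b c : Ordinal} (h : b ≤ c) (a : Ordinal) : a ⨳ b ≤ a ⨳ c := by
  rcases h.eq_or_lt with rfl | h
  · exact le_rfl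
  rcases (zero_le (a := a)).eq_or_lt with rfl | ha
  · simp
  · exact (nmul_lt_nmul_of_pos_left h ha).le

theorem one_nmul (a : Ordinal) : 1 ⨳ a = a := by
  induction a using WellFoundedLT.induction with | ind a IH =>
  refine le_antisymm (nmul_le_iff.2 fun a' ha b' hb => ?_) (le_of_forall_lt fun x hx => ?_)
  · rw [Order.lt_one_iff.1 ha, IH b' hb]
    simpa using hb
  · rw [← IH x hx]
    exact nmul_lt_nmul_of_pos_left hx zero_lt_one

theorem nmul_one (a : Ordinal) : a ⨳ 1 = a := by rw [nmul_comm, one_nmul]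

theorem nmul_nadd (a b c : Ordinal) : a ⨳ (b ♯ c) = a ⨳ b ♯ a ⨳ c := by
  induction a using WellFoundedLT.induction generalizing b c with | ind a IHa =>
  induction b using WellFoundedLT.induction generalizing c with | ind b IHb =>
  induction c using WellFoundedLT.induction with | ind c IHc =>
  refine le_antisymm (nmul_le_iff.2 fun a' ha d hd => ?_)
    (nadd_le_iff.2 ⟨fun d hd => ?_, fun d hd => ?_⟩)
  · rw [IHa a' ha b c]
    rcases lt_nadd_iff.1 hd with ⟨b', hb, hd⟩ | ⟨c', hc, hd⟩
    · have h := nadd_lt_nadd_of_lt_of_le (nmul_nadd_lt ha hb) (nmul_nadd_le ha.le hd)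
      rw [IHa a' ha b' c, IHb b' hb c] at h
      refine lt_of_nadd_lt_nadd_right (a := a ⨳ b' ♯ a' ⨳ b') ?_
      calc _ = _ := by ac_rfl
        _ < _ := h
        _ = _ := by ac_rfl
    · have h := nadd_lt_nadd_of_lt_of_le (nmul_nadd_lt ha hc) (nmul_nadd_le ha.le hd)
      rw [IHa a' ha b c', IHc c' hc] at h
      refine lt_of_nadd_lt_nadd_right (a := a ⨳ c' ♯ a' ⨳ c') ?_
      calc _ = _ := by ac_rfl
        _ < _ := h
        _ = _ := by ac_rfl
  · obtain ⟨a', ha, b', hb, hd⟩ := lt_nmul_iff.1 hd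
    have h := nmul_nadd_lt ha (nadd_lt_nadd_right hb c)
    rw [IHa a' ha b c, IHb b' hb c, IHa a' ha b' c] at h
    refine lt_of_nadd_lt_nadd_right (a := a' ⨳ b' ♯ a' ⨳ c) ?_
    calc _ = (d ♯ a' ⨳ b') ♯ (a ⨳ c ♯ a' ⨳ c) := by ac_rfl
      _ ≤ (a' ⨳ b ♯ a ⨳ b') ♯ (a ⨳ c ♯ a' ⨳ c) := nadd_le_nadd_right hd _
      _ = _ := by ac_rfl
      _ < _ := h
      _ = _ := by ac_rfl
  · obtain ⟨a', ha, c', hc, hd⟩ := lt_nmul_iff.1 hd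
    have h := nmul_nadd_lt ha (nadd_lt_nadd_left hc b)
    rw [IHa a' ha b c, IHc c' hc, IHa a' ha b c'] at h
    refine lt_of_nadd_lt_nadd_right (a := a' ⨳ c' ♯ a' ⨳ b) ?_
    calc _ = (d ♯ a' ⨳ c') ♯ (a ⨳ b ♯ a' ⨳ b) := by ac_rfl
      _ ≤ (a' ⨳ c ♯ a ⨳ c') ♯ (a ⨳ b ♯ a' ⨳ b) := nadd_le_nadd_right hd _
      _ = _ := by ac_rfl
      _ < _ := h
      _ = _ := by ac_rfl

theorem nadd_nmul (a b c : Ordinal) : (a ♯ b) ⨳ c = a ⨳ c ♯ b ⨳ c := by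
  rw [nmul_comm, nmul_nadd, nmul_comm, nmul_comm c]

theorem succ_nmul (a b : Ordinal) : Order.succ a ⨳ b = a ⨳ b ♯ b := by
  rw [← nadd_one, nadd_nmul, one_nmul]

theorem natCast_succ_nmul (n : ℕ) (a : Ordinal) : ((n + 1 : ℕ) : Ordinal) ⨳ a = n ⨳ a ♯ a := by
  rw [Nat.cast_succ, ← Order.succ_eq_add_one, succ_nmul]

theorem nmul_natCast_nmul (a b : Ordinal) (n : ℕ) : a ⨳ (n ⨳ b) = n ⨳ (a ⨳ b) := by
  induction n with
  | zero => simp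
  | succ n ih => rw [natCast_succ_nmul, natCast_succ_nmul, nmul_nadd, ih]

theorem mul_le_nmul (a b : Ordinal) : a * b ≤ a ⨳ b := by
  induction b using WellFoundedLT.induction with | ind b IH =>
  rcases eq_or_ne a 0 with rfl | ha
  · simp
  refine le_of_forall_lt fun x hx => ?_
  have hq : x / a < b := (lt_mul_iff_div_lt ha).1 hx
  calc x = a * (x / a) + x % a := (div_add_mod x a).symm
    _ < a * (x / a) + a := (add_lt_add_iff_left _).2 (mod_lt x ha)
    _ ≤ a ⨳ (x / a) ♯ a := (add_le_add_left (IH _ hq) a).trans (add_le_nadd _ _)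
    _ = a ⨳ Order.succ (x / a) := by rw [← nadd_one, nmul_nadd, nmul_one]
    _ ≤ a ⨳ b := nmul_le_nmul_left (Order.succ_le_of_lt hq) a

end NaturalMultiplication


section Principal

variable {o : Ordinal}

theorem IsPrincipal.add_of_nadd (ho : IsPrincipal nadd o) : IsPrincipal (· + ·) o :=
  fun _ _ ha hb => (add_le_nadd _ _).trans_lt (ho ha hb)

theorem mul_nadd_of_isPrincipal (ho : IsPrincipal nadd o) (q : Ordinal) {r : Ordinal}
    (hr : r < o) : o * q ♯ r = o * q + r := by
  have ho₀ : o ≠ 0 := (zero_le.trans_lt hr).ne'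
  induction q using WellFoundedLT.induction generalizing r with | ind q IHq =>
  induction r using WellFoundedLT.induction with | ind r IHr =>
  refine le_antisymm (nadd_le_iff.2 ⟨fun a ha => ?_, fun r' hr' => ?_⟩) (add_le_nadd _ _)
  · have hq : a / o < q := (lt_mul_iff_div_lt ho₀).1 ha
    have hmod : a % o ♯ r < o := ho (mod_lt a ho₀) hr
    calc a ♯ r = o * (a / o) ♯ (a % o ♯ r) := by
          rw [← nadd_assoc, IHq _ hq (mod_lt a ho₀), div_add_mod]
      _ = o * (a / o) + (a % o ♯ r) := IHq _ hq hmod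
      _ < o * Order.succ (a / o) := by rw [mul_succ]; exact (add_lt_add_iff_left _).2 hmod
      _ ≤ o * q + r := (mul_le_mul_right (Order.succ_le_of_lt hq) o).trans le_self_add
  · rw [IHr r' hr' (hr'.trans hr)]
    exact (add_lt_add_iff_left _).2 hr'

theorem mul_nadd_self_of_isPrincipal (ho : IsPrincipal nadd o) (q : Ordinal) :
    o * q ♯ o = o * Order.succ q := by
  rcases eq_or_ne o 0 with rfl | ho₀
  · simp
  induction q using WellFoundedLT.induction with | ind q IH =>
  rw [mul_succ]
  refine le_antisymm (nadd_le_iff.2 ⟨fun a ha => ?_, fun r hr => ?_⟩) (add_le_nadd _ _)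
  · have hq : a / o < q := (lt_mul_iff_div_lt ho₀).1 ha
    calc a ♯ o = o * (a / o) ♯ o ♯ a % o := by
          conv_lhs => rw [← div_add_mod a o, ← mul_nadd_of_isPrincipal ho _ (mod_lt a ho₀)]
          rw [nadd_assoc, nadd_comm (a % o), ← nadd_assoc]
      _ = o * Order.succ (a / o) + a % o := by
          rw [IH _ hq, mul_nadd_of_isPrincipal ho _ (mod_lt a ho₀)]
      _ < o * Order.succ (a / o) + o := (add_lt_add_iff_left _).2 (mod_lt a ho₀)
      _ ≤ o * q + o := by
          rw [← mul_succ, ← mul_succ]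
          exact mul_le_mul_right (Order.succ_le_succ (Order.succ_le_of_lt hq)) o
  · rw [mul_nadd_of_isPrincipal ho q hr]
    exact (add_lt_add_iff_left _).2 hr

theorem mul_nadd_mul_natCast_of_isPrincipal (ho : IsPrincipal nadd o) (q : Ordinal) (n : ℕ) :
    o * q ♯ o * n = o * (q + n) := by
  induction n with
  | zero => simp
  | succ n ih =>
    rw [Nat.cast_succ, ← Order.succ_eq_add_one, ← mul_nadd_self_of_isPrincipal ho,
      ← nadd_assoc, ih, mul_nadd_self_of_isPrincipal ho, Order.succ_eq_add_one,
      Order.succ_eq_add_one, add_assoc]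

theorem isPrincipal_nadd_omega0_opow (c : Ordinal) : IsPrincipal nadd (ω ^ c) := by
  induction c using WellFoundedLT.induction with | ind c IH =>
  rw [isPrincipal_iff_of_monotone (fun a _ _ h => nadd_le_nadd_left h a)
    (fun a _ _ h => nadd_le_nadd_right h a)]
  intro a ha
  rcases eq_or_ne c 0 with rfl | hc
  · rw [opow_zero, Order.lt_one_iff] at ha
    simp [ha]
  obtain ⟨c', hc', n, hn⟩ := (lt_omega0_opow hc).1 ha
  calc a ♯ a ≤ ω ^ c' * n ♯ ω ^ c' * n := nadd_le_nadd hn.le hn.le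
    _ = ω ^ c' * (n + n : ℕ) := by
        rw [mul_nadd_mul_natCast_of_isPrincipal (IH c' hc'), Nat.cast_add]
    _ < ω ^ c := opow_mul_lt_opow (natCast_lt_omega0 _) hc'

theorem nadd_lt_add_of_isPrincipal (ho : IsPrincipal nadd o) {x : Ordinal} (hx : x < o)
    (a : Ordinal) : a ♯ x < a + o := by
  have ho₀ : o ≠ 0 := (zero_le.trans_lt hx).ne'
  have hmod : a % o < o := mod_lt a ho₀
  calc a ♯ x = o * (a / o) ♯ (a % o ♯ x) := by
        rw [← nadd_assoc, mul_nadd_of_isPrincipal ho _ hmod, div_add_mod]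
    _ = o * (a / o) + (a % o ♯ x) := mul_nadd_of_isPrincipal ho _ (ho hmod hx)
    _ < o * (a / o) + o := (add_lt_add_iff_left _).2 (ho hmod hx)
    _ = a + o := by
        conv_rhs => rw [← div_add_mod a o, add_assoc, ho.add_of_nadd.add_eq_right hmod]

theorem IsPrincipal.add_le_add_of_lt_add (ho : IsPrincipal (· + ·) o) {u v : Ordinal}
    (h : u < v + o) : u + o ≤ v + o := by
  rcases le_or_gt u v with huv | hvu
  · exact add_le_add_left huv o
  · rw [← Ordinal.add_sub_cancel_of_le hvu.le, add_assoc,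
      ho.add_eq_right ((sub_lt_of_le hvu.le).2 h)]

theorem natCast_nmul_lt_of_isPrincipal (ho : IsPrincipal nadd o) {x : Ordinal} (hx : x < o)
    (n : ℕ) : (n : Ordinal) ⨳ x < o := by
  induction n with
  | zero => simpa using zero_le.trans_lt hx
  | succ n ih => rw [natCast_succ_nmul]; exact ho ih hx

end Principal


section OmegaNmul

theorem omega0_nmul_lt_opow_succ_of_forall_lt {c b : Ordinal}
    (hT : ∀ c' < c, ω ⨳ ω ^ c' ≤ ω ^ (c' + 1)) (hb : b < ω ^ c) : ω ⨳ b < ω ^ (c + 1) := by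
  rcases eq_or_ne c 0 with rfl | hc
  · rw [opow_zero, Order.lt_one_iff] at hb
    simp [hb]
  obtain ⟨c', hc', n, hn⟩ := (lt_omega0_opow hc).1 hb
  have hlt : ω ^ (c' + 1) < ω ^ (c + 1) :=
    (opow_lt_opow_iff_right one_lt_omega0).2 ((Order.add_one_le_iff.2 hc').trans_lt (lt_add_one c))
  calc ω ⨳ b ≤ ω ⨳ (n ⨳ ω ^ c') :=
        nmul_le_nmul_left (hn.le.trans ((mul_le_nmul _ _).trans (nmul_comm _ _).le)) ω
    _ = n ⨳ (ω ⨳ ω ^ c') := nmul_natCast_nmul _ _ _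
    _ ≤ n ⨳ ω ^ (c' + 1) := nmul_le_nmul_left (hT c' hc') _
    _ < ω ^ (c + 1) := natCast_nmul_lt_of_isPrincipal (isPrincipal_nadd_omega0_opow _) hlt n

theorem omega0_nmul_opow_le (c : Ordinal) : ω ⨳ ω ^ c ≤ ω ^ (c + 1) := by
  induction c using WellFoundedLT.induction with | ind c IH =>
  refine nmul_le_iff.2 fun m hm b hb => ?_
  obtain ⟨n, rfl⟩ := lt_omega0.1 hm
  have hP := isPrincipal_nadd_omega0_opow (c + 1)
  have hc : ω ^ c < ω ^ (c + 1) := (opow_lt_opow_iff_right one_lt_omega0).2 (lt_add_one c)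
  exact (hP (natCast_nmul_lt_of_isPrincipal hP hc n)
    (omega0_nmul_lt_opow_succ_of_forall_lt IH hb)).trans_le le_self_nadd

theorem omega0_nmul_lt_opow_succ {c b : Ordinal} (hb : b < ω ^ c) : ω ⨳ b < ω ^ (c + 1) :=
  omega0_nmul_lt_opow_succ_of_forall_lt (fun c' _ => omega0_nmul_opow_le c') hb

theorem opow_succ_le_omega0_nmul_opow (c : Ordinal) : ω ^ (c + 1) ≤ ω ⨳ ω ^ c := by
  rw [opow_add_one, nmul_comm]
  exact mul_le_nmul _ _

theorem omega0_nmul_add_opow_succ_le (x c : Ordinal) :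
    ω ⨳ x + ω ^ (c + 1) ≤ ω ⨳ (x + ω ^ c) := by
  set o := ω ^ c
  have hP : IsPrincipal nadd o := isPrincipal_nadd_omega0_opow c
  have hmod : x % o < o := mod_lt x (opow_ne_zero c omega0_ne_zero)
  have hx : ω ⨳ x = ω ⨳ (o * (x / o)) ♯ ω ⨳ (x % o) := by
    rw [← nmul_nadd, mul_nadd_of_isPrincipal hP _ hmod, div_add_mod]
  have hxo : x + o = o * (x / o) ♯ o := by
    conv_lhs => rw [← div_add_mod x o, add_assoc, hP.add_of_nadd.add_eq_right hmod]
    rw [mul_nadd_self_of_isPrincipal hP, mul_succ]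
  have hlt : ω ⨳ x < ω ⨳ (o * (x / o)) + ω ^ (c + 1) := by
    rw [hx]
    exact nadd_lt_add_of_isPrincipal (isPrincipal_nadd_omega0_opow _)
      (omega0_nmul_lt_opow_succ hmod) _
  calc ω ⨳ x + ω ^ (c + 1) ≤ ω ⨳ (o * (x / o)) + ω ^ (c + 1) :=
        (isPrincipal_add_omega0_opow _).add_le_add_of_lt_add hlt
    _ ≤ ω ⨳ (o * (x / o)) ♯ ω ⨳ o :=
        (add_le_nadd _ _).trans (nadd_le_nadd_left (opow_succ_le_omega0_nmul_opow c) _)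
    _ = ω ⨳ (x + o) := by rw [hxo, nmul_nadd]

theorem omega0_nmul_nadd_lt_omega0_nmul {γ b y : Ordinal} (hγ : γ < b)
    (hy : y < ω ^ (log ω (b - γ) + 1)) : ω ⨳ γ ♯ y < ω ⨳ b := by
  have hδ : b - γ ≠ 0 := Ordinal.sub_ne_zero_iff_lt.2 hγ
  calc ω ⨳ γ ♯ y < ω ⨳ γ + ω ^ (log ω (b - γ) + 1) :=
        nadd_lt_add_of_isPrincipal (isPrincipal_nadd_omega0_opow _) hy _
    _ ≤ ω ⨳ (γ + ω ^ log ω (b - γ)) := omega0_nmul_add_opow_succ_le _ _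
    _ ≤ ω ⨳ (γ + (b - γ)) := nmul_le_nmul_left (add_le_add_right (opow_log_le_self ω hδ) γ) ω
    _ = ω ⨳ b := by rw [Ordinal.add_sub_cancel_of_le hγ.le]

end OmegaNmul


section TailMeasure

noncomputable def natSum (f : ℕ → Ordinal) : ℕ → Ordinal
  | 0 => 0
  | n + 1 => natSum f n ♯ f n

theorem natSum_le_natSum {f g : ℕ → Ordinal} {n : ℕ} (h : ∀ d < n, f d ≤ g d) :
    natSum f n ≤ natSum g n := by
  induction n with
  | zero => exact le_rfl
  | succ n ih => exact nadd_le_nadd (ih fun d hd => h d (by omega)) (h n (by omega))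

theorem natSum_lt_natSum {f g : ℕ → Ordinal} {n e : ℕ} (h : ∀ d < n, f d ≤ g d) (he : e < n)
    (hlt : f e < g e) : natSum f n < natSum g n := by
  induction n with
  | zero => omega
  | succ n ih =>
    rcases (Nat.lt_succ_iff_lt_or_eq.1 he) with he | rfl
    · exact nadd_lt_nadd_of_lt_of_le (ih (fun d hd => h d (by omega)) he) (h n (by omega))
    · exact nadd_lt_nadd_of_le_of_lt (natSum_le_natSum fun d hd => h d (by omega)) hlt

theorem natSum_nadd (f g : ℕ → Ordinal) (n : ℕ) :
    natSum (fun d => f d ♯ g d) n = natSum f n ♯ natSum g n := by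
  induction n with
  | zero => simp [natSum]
  | succ n ih =>
    simp only [natSum, ih]
    ac_rfl

theorem natSum_const (x : Ordinal) (n : ℕ) : natSum (fun _ => x) n = n ⨳ x := by
  induction n with
  | zero => simp [natSum]
  | succ n ih => rw [natSum, ih, natCast_succ_nmul]

theorem natSum_eq_of_le {f : ℕ → Ordinal} {D n : ℕ} (hDn : D ≤ n) (h : ∀ d, D ≤ d → f d = 0) :
    natSum f n = natSum f D := by
  induction n, hDn using Nat.le_induction with
  | base => rfl
  | succ n hDn ih => rw [natSum, h n hDn, nadd_zero, ih]

theorem sub_le_sub_nadd_sub {ν β b γ : Ordinal} (hν : ν ≤ β) (hγ : γ ≤ b) :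
    ν - γ ≤ (β - b) ♯ (b - γ) := by
  rw [sub_le]
  calc ν ≤ b + (β - b) := hν.trans (le_add_sub _ _)
    _ = γ + ((b - γ) + (β - b)) := by rw [← add_assoc, Ordinal.add_sub_cancel_of_le hγ]
    _ ≤ γ + ((β - b) ♯ (b - γ)) :=
        add_le_add_right ((add_le_nadd _ _).trans (nadd_comm _ _).le) γ

-- Ordinal subtraction truncates: entries `β d < β D` contribute nothing.
noncomputable def tailMeasure (D : ℕ) (β : ℕ → Ordinal) : Ordinal :=
  ω ⨳ β D ♯ natSum (fun d => β d - β D) D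

-- The `D'` new excesses, each at most `b - γ`, are absorbed by `ω ⨳ b` versus `ω ⨳ γ`.
theorem tailMeasure_lt_of_tail_lt {D D' : ℕ} {β β' : ℕ → Ordinal} (hDD' : D ≤ D')
    (hβ : ∀ d, D ≤ d → β d = β D) (hle : ∀ d < D', β' d ≤ β d) (hlt : β' D' < β D) :
    tailMeasure D' β' < tailMeasure D β := by
  set b := β D
  set γ := β' D'
  set S := natSum (fun d => β d - b) D
  have hsum : natSum (fun d => β' d - γ) D' ≤ D' ⨳ (b - γ) ♯ S :=
    calc natSum (fun d => β' d - γ) D' ≤ natSum (fun d => (β d - b) ♯ (b - γ)) D' :=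
          natSum_le_natSum fun d hd => sub_le_sub_nadd_sub (hle d hd) hlt.le
      _ = S ♯ D' ⨳ (b - γ) := by
          rw [natSum_nadd, natSum_const,
            natSum_eq_of_le hDD' fun d hd => by rw [hβ d hd, Ordinal.sub_self]]
      _ = D' ⨳ (b - γ) ♯ S := nadd_comm _ _
  have hfin : D' ⨳ (b - γ) < ω ^ (log ω (b - γ) + 1) := by
    refine natCast_nmul_lt_of_isPrincipal (isPrincipal_nadd_omega0_opow _) ?_ D'
    simpa using lt_opow_succ_log_self one_lt_omega0 (b - γ)
  calc tailMeasure D' β' ≤ ω ⨳ γ ♯ (D' ⨳ (b - γ) ♯ S) := nadd_le_nadd_left hsum _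
    _ = ω ⨳ γ ♯ D' ⨳ (b - γ) ♯ S := (nadd_assoc _ _ _).symm
    _ < ω ⨳ b ♯ S := nadd_lt_nadd_right (omega0_nmul_nadd_lt_omega0_nmul hlt hfin) S

theorem tailMeasure_lt_of_lt {D e : ℕ} {β β' : ℕ → Ordinal} (he : e < D)
    (hle : ∀ d < D, β' d ≤ β d) (hD : β' D = β D) (hbase : β D ≤ β' e) (hlt : β' e < β e) :
    tailMeasure D β' < tailMeasure D β := by
  rw [tailMeasure, tailMeasure, hD]
  refine nadd_lt_nadd_left (natSum_lt_natSum (fun d hd => ?_) he ?_) _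
  · exact sub_le.2 ((hle d hd).trans (le_add_sub _ _))
  · rwa [lt_sub, Ordinal.add_sub_cancel_of_le hbase]

-- The bounds after a new leading coefficient in degree `e`, with `γ` the goodness it achieves.
noncomputable def capFrom (β : ℕ → Ordinal) (e : ℕ) (γ : Ordinal) (d : ℕ) : Ordinal :=
  if d < e then β d else min (β d) γ

theorem capFrom_le (β : ℕ → Ordinal) (e : ℕ) (γ : Ordinal) (d : ℕ) : capFrom β e γ d ≤ β d := by
  unfold capFrom
  split_ifs
  exacts [le_rfl, min_le_left _ _]

theorem capFrom_of_le {β : ℕ → Ordinal} {e d : ℕ} (γ : Ordinal) (hd : e ≤ d) :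
    capFrom β e γ d = min (β d) γ := by
  simp [capFrom, not_lt.2 hd]

theorem capFrom_eq_of_le {D e : ℕ} {β : ℕ → Ordinal} (γ : Ordinal) (hβ : ∀ d, D ≤ d → β d = β D)
    {d : ℕ} (hd : max D e ≤ d) : capFrom β e γ d = capFrom β e γ (max D e) := by
  rw [capFrom_of_le γ (le_of_max_le_right hd), capFrom_of_le γ (le_max_right D e),
    hβ d (le_of_max_le_left hd), hβ _ (le_max_left D e)]

theorem tailMeasure_capFrom_lt {D e : ℕ} {β : ℕ → Ordinal} {γ : Ordinal}
    (hβ : ∀ d, D ≤ d → β d = β D) (hγ : γ < β e) :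
    tailMeasure (max D e) (capFrom β e γ) < tailMeasure D β := by
  have htail : capFrom β e γ (max D e) = min (β D) γ := by
    rw [capFrom_of_le γ (le_max_right D e), hβ _ (le_max_left D e)]
  rcases lt_or_ge γ (β D) with h | h
  · refine tailMeasure_lt_of_tail_lt (le_max_left D e) hβ (fun d _ => capFrom_le β e γ d) ?_
    rwa [htail, min_eq_right h.le]
  · have heD : e < D := by
      by_contra! hDe
      exact (hγ.trans_le (hβ e hDe).le).not_ge h
    have hcap_e : capFrom β e γ e = γ := by rw [capFrom_of_le γ le_rfl, min_eq_right hγ.le]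
    rw [max_eq_left heD.le] at htail ⊢
    exact tailMeasure_lt_of_lt heD (fun d _ => capFrom_le β e γ d) (htail.trans (min_eq_left h))
      (hcap_e.symm ▸ h) (hcap_e.symm ▸ hγ)

end TailMeasure

end Ordinal

section AlphaGood

variable {A : Type*} {M : Type*} [Ring A] [AddCommGroup M] [Module A M]

theorem goodList_append_singleton_iff {σ : List M} {x : M} :
    GoodList A (σ ++ [x]) ↔ x ∈ Submodule.span A {y | y ∈ σ} := by
  refine ⟨fun ⟨l, y, heq, hy⟩ => ?_, fun h => ⟨σ, x, rfl, h⟩⟩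
  obtain ⟨rfl, h⟩ := List.append_inj' heq rfl
  obtain rfl : x = y := by simpa using h
  exact hy

theorem AlphaGood.exists_lt_of_notMem {β : Ordinal} {σ : List M} (h : AlphaGood A β σ) {x : M}
    (hx : x ∉ Submodule.span A {y | y ∈ σ}) : ∃ γ < β, AlphaGood A γ (σ ++ [x]) := by
  rw [AlphaGood] at h
  rcases h x with hg | ⟨γ, hγ, hγσ⟩
  · exact absurd (goodList_append_singleton_iff.1 hg) hx
  · exact ⟨γ, hγ, hγσ⟩

variable (A) in
def AlphaGoodWithin (β : Ordinal) (N : Submodule A M) : Prop :=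
  ∃ τ : List M, Submodule.span A {y | y ∈ τ} ≤ N ∧ AlphaGood A β τ

theorem AlphaGoodWithin.mono {β : Ordinal} {N N' : Submodule A M} (h : AlphaGoodWithin A β N)
    (hN : N ≤ N') : AlphaGoodWithin A β N' :=
  let ⟨τ, hτ, hgood⟩ := h
  ⟨τ, hτ.trans hN, hgood⟩

end AlphaGood

namespace Ideal

open Polynomial

variable {A : Type*} [Ring A] {I J : Ideal A[X]}

theorem mem_leadingCoeffNth_iff_exists_coeff {n : ℕ} {a : A} :
    a ∈ I.leadingCoeffNth n ↔ ∃ p ∈ I, p.degree ≤ n ∧ p.coeff n = a := by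
  simp only [leadingCoeffNth, degreeLE, Submodule.mem_map, Submodule.mem_inf, mem_ofPolynomial,
    Polynomial.mem_degreeLE, lcoeff_apply]
  exact exists_congr fun p => by tauto

theorem leadingCoeffNth_mono_left (h : I ≤ J) (n : ℕ) : I.leadingCoeffNth n ≤ J.leadingCoeffNth n :=
  Submodule.map_mono (inf_le_inf_left _ h)

theorem leadingCoeffNth_mono_right {m n : ℕ} (hmn : m ≤ n) :
    I.leadingCoeffNth m ≤ I.leadingCoeffNth n := by
  intro a ha
  obtain ⟨p, hp, hdeg, rfl⟩ := mem_leadingCoeffNth_iff_exists_coeff.1 ha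
  refine mem_leadingCoeffNth_iff_exists_coeff.2 ⟨p * X ^ (n - m), ?_, ?_, ?_⟩
  · rw [← X_pow_mul]
    exact I.mul_mem_left _ hp
  · refine (degree_mul_le _ _).trans ?_
    grw [hdeg, degree_X_pow_le]
    rw [← Nat.cast_add, Nat.add_sub_cancel' hmn]
  · rw [← coeff_mul_X_pow p (n - m) m, Nat.add_sub_cancel' hmn]

theorem leadingCoeff_mem_leadingCoeffNth {p : A[X]} (hp : p ∈ I) :
    p.leadingCoeff ∈ I.leadingCoeffNth p.natDegree :=
  mem_leadingCoeffNth_iff_exists_coeff.2 ⟨p, hp, degree_le_natDegree, rfl⟩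

theorem exists_sub_mem_leadingCoeff_notMem {x : A[X]} (hx : x ∉ I) :
    ∃ g, g - x ∈ I ∧ g.leadingCoeff ∉ I.leadingCoeffNth g.natDegree := by
  induction x using degree_lt_wf.induction with | _ x IH
  by_cases hlc : x.leadingCoeff ∈ I.leadingCoeffNth x.natDegree
  · obtain ⟨h, hI, hdeg, hcoeff⟩ := mem_leadingCoeffNth_iff_exists_coeff.1 hlc
    have hx0 : x ≠ 0 := by rintro rfl; exact hx I.zero_mem
    have hdeg_eq : h.degree = x.degree := by
      refine le_antisymm (hdeg.trans_eq (degree_eq_natDegree hx0).symm) ?_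
      rw [degree_eq_natDegree hx0]
      exact le_degree_of_ne_zero (hcoeff ▸ leadingCoeff_ne_zero.2 hx0)
    have hlc_eq : h.leadingCoeff = x.leadingCoeff := by
      rw [Polynomial.leadingCoeff, natDegree_eq_of_degree_eq hdeg_eq, hcoeff]
    have hxh : x - h ∉ I := fun hm => hx (by simpa using add_mem hm hI)
    obtain ⟨g, hg, hglc⟩ := IH _ (degree_sub_lt_left hdeg_eq.symm hx0 hlc_eq.symm) hxh
    refine ⟨g, ?_, hglc⟩
    rw [show g - x = g - (x - h) - h by abel]
    exact sub_mem hg hI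
  · exact ⟨x, by simp, hlc⟩

end Ideal

namespace Polynomial

open Ordinal Submodule

variable {A : Type*} [Ring A]

theorem exists_capFrom_alphaGoodWithin_of_notMem {σ : List A[X]} {β : ℕ → Ordinal}
    (hβ : ∀ e, AlphaGoodWithin A (β e) (Ideal.leadingCoeffNth (span A[X] {y | y ∈ σ}) e)) {x : A[X]}
    (hx : x ∉ span A[X] {y | y ∈ σ}) :
    ∃ e γ, γ < β e ∧ ∀ d, AlphaGoodWithin A (capFrom β e γ d)
      (Ideal.leadingCoeffNth (span A[X] {y | y ∈ σ ++ [x]}) d) := by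
  set I : Ideal A[X] := span A[X] {y | y ∈ σ}
  set I' : Ideal A[X] := span A[X] {y | y ∈ σ ++ [x]}
  have hII' : I ≤ I' := span_mono fun y hy => List.mem_append_left _ hy
  obtain ⟨g, hgx, hlc⟩ := Ideal.exists_sub_mem_leadingCoeff_notMem hx
  have hgI' : g ∈ I' := by
    simpa using add_mem (hII' hgx) (subset_span (by simp) : x ∈ I')
  obtain ⟨τ, hτ, hτgood⟩ := hβ g.natDegree
  obtain ⟨γ, hγ, hγgood⟩ := hτgood.exists_lt_of_notMem fun h => hlc (hτ h)
  refine ⟨g.natDegree, γ, hγ, fun d => ?_⟩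
  have hold : AlphaGoodWithin A (β d) (I'.leadingCoeffNth d) :=
    (hβ d).mono (Ideal.leadingCoeffNth_mono_left hII' d)
  by_cases hd : d < g.natDegree
  · rwa [capFrom, if_pos hd]
  rw [capFrom_of_le γ (not_lt.1 hd)]
  rcases le_total (β d) γ with hβγ | hγβ
  · rwa [min_eq_left hβγ]
  rw [min_eq_right hγβ]
  refine ⟨τ ++ [g.leadingCoeff], span_le.2 fun y hy => ?_, hγgood⟩
  refine Ideal.leadingCoeffNth_mono_right (not_lt.1 hd) ?_
  rcases List.mem_append.1 hy with hy | hy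
  · exact Ideal.leadingCoeffNth_mono_left hII' _ (hτ (subset_span hy))
  · rw [List.mem_singleton.1 hy]
    exact Ideal.leadingCoeff_mem_leadingCoeffNth hgI'

theorem alphaGood_of_forall_alphaGoodWithin_leadingCoeffNth {σ : List A[X]} {D : ℕ}
    {β : ℕ → Ordinal} (hβD : ∀ d, D ≤ d → β d = β D)
    (hβ : ∀ e, AlphaGoodWithin A (β e) (Ideal.leadingCoeffNth (span A[X] {y | y ∈ σ}) e)) :
    AlphaGood A[X] (tailMeasure D β) σ := by
  induction hμ : tailMeasure D β using WellFoundedLT.induction generalizing σ D β with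
  | ind μ IH =>
  rw [AlphaGood]
  intro x
  by_cases hx : x ∈ span A[X] {y | y ∈ σ}
  · exact Or.inl (goodList_append_singleton_iff.2 hx)
  obtain ⟨e, γ, hγ, hcap⟩ := exists_capFrom_alphaGoodWithin_of_notMem hβ hx
  have hlt : tailMeasure (max D e) (capFrom β e γ) < μ := hμ ▸ tailMeasure_capFrom_lt hβD hγ
  exact Or.inr ⟨_, hlt, IH _ hlt (D := max D e) (β := capFrom β e γ)
    (fun d hd => capFrom_eq_of_le γ hβD hd) hcap rfl⟩

end Polynomial

/-- If `A` is an `α`-Noetherian ring, then `A[X]` is `(ω ⊗ α)`-Noetherian, where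
`⊗` is the Hessenberg natural product. -/
theorem polynomial_ring_nmul_noetherian {A : Type*} [Ring A] (α : Ordinal)
    (h : AlphaGood A α ([] : List A)) :
    AlphaGood (Polynomial A) (Ordinal.nmul Ordinal.omega0 α)
      ([] : List (Polynomial A)) := by
  have hμ : Ordinal.tailMeasure 0 (fun _ => α) = Ordinal.nmul Ordinal.omega0 α := by
    simp [Ordinal.tailMeasure, Ordinal.natSum]
  rw [← hμ]
  refine Polynomial.alphaGood_of_forall_alphaGoodWithin_leadingCoeffNth (fun _ _ => rfl)
    fun _ => ⟨[], ?_, h⟩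
  simp
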